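/- arXiv:2111.10393 — 4 statements merged into one kernel-verified Lean document; each statement's English description precedes it below -/
import Mathlib

section
/- Let k ≥ 2 and r ≥ 2 be integers, let H be a k-uniform hypergraph, and let G be the complete (k+1)-uniform hypergraph on (r−1)k+1 vertices, with V(G) disjoint from V(H). Then G ⋉ H is a (k+1)-uniform hypergraph, ν(G ⋉ H) ≤ (r−1)k+1, and G ⋉ H is r-colorable if and only if H is r-colorable. -/
/-!
A monochromatic edge `e` of `H` would forbid its colour on all of `V(G)`, since `e ∪ {x}` is an
edge for every `x ∈ V(G)`; with only `r - 1` colours left on `(r - 1)k + 1` vertices, pigeonhole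
gives `k + 1` vertices of one colour, a monochromatic edge of `G`. Conversely, `V(G)` has at most
`rk` vertices, so it can be split into `r` colour classes of size at most `k`; this colours `G`
properly, and every edge `e ∪ {x}` contains the properly coloured edge `e` of `H`. Every edge of
`G ⋉ H` meets `V(G)`, so a matching has at most `|V(G)|` edges.
-/

open Finset

/-- `(V, E)` is a hypergraph: every edge is a nonempty subset of `V`. -/
def IsHypergraph {α : Type*} (V : Finset α) (E : Finset (Finset α)) : Prop :=
  ∀ e ∈ E, e ⊆ V ∧ e.Nonempty

/-- A matching: a set of pairwise disjoint edges. -/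
def IsMatching {α : Type*} (M : Finset (Finset α)) : Prop :=
  ∀ e ∈ M, ∀ f ∈ M, e ≠ f → Disjoint e f

/-- `ν(G) ≤ s`: every matching consisting of edges of `E` has at most `s` edges. -/
def MatchNumLE {α : Type*} (E : Finset (Finset α)) (s : ℕ) : Prop :=
  ∀ M ⊆ E, IsMatching M → M.card ≤ s

/-- An edge `e` is monochromatic under the coloring `c`. -/
def Mono {α : Type*} (e : Finset α) {r : ℕ} (c : α → Fin r) : Prop :=
  ∃ i, ∀ v ∈ e, c v = i

/-- `c` is a proper coloring of the hypergraph with edge set `E`: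
no edge is monochromatic. -/
def IsColoring {α : Type*} (E : Finset (Finset α)) {r : ℕ} (c : α → Fin r) : Prop :=
  ∀ e ∈ E, ¬ Mono e c

/-- The hypergraph with edge set `E` is `r`-colorable. -/
def HColorable {α : Type*} (E : Finset (Finset α)) (r : ℕ) : Prop :=
  ∃ c : α → Fin r, IsColoring E c

/-- The edge set of `G ⋉ H`: the edges of `G` together with all sets `e ∪ {x}`
for `e` an edge of `H` and `x` a vertex of `G`. -/
def ltimesEdges {α : Type*} [DecidableEq α] (VG : Finset α)
    (EG EH : Finset (Finset α)) : Finset (Finset α) :=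
  EG ∪ (EH ×ˢ VG).image (fun p => insert p.2 p.1)

section Hypergraph

variable {α : Type*}

theorem mem_ltimesEdges [DecidableEq α] {VG : Finset α} {EG EH : Finset (Finset α)}
    {e : Finset α} :
    e ∈ ltimesEdges VG EG EH ↔ e ∈ EG ∨ ∃ f ∈ EH, ∃ x ∈ VG, insert x f = e := by
  simp [ltimesEdges, and_assoc]

section LTimes

variable [DecidableEq α] {k : ℕ} {VG : Finset α} {EG EH : Finset (Finset α)}

theorem card_eq_of_mem_ltimesEdges (hG : ∀ e ∈ EG, #e = k + 1) (hH : ∀ f ∈ EH, #f = k)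
    (hdisj : ∀ f ∈ EH, Disjoint VG f) : ∀ e ∈ ltimesEdges VG EG EH, #e = k + 1 := by
  intro e he
  rcases mem_ltimesEdges.1 he with he | ⟨f, hf, x, hx, rfl⟩
  · exact hG e he
  · rw [card_insert_of_notMem (disjoint_left.1 (hdisj f hf) hx), hH f hf]

theorem exists_mem_of_mem_ltimesEdges (hG : ∀ e ∈ EG, ∃ x ∈ VG, x ∈ e) :
    ∀ e ∈ ltimesEdges VG EG EH, ∃ x ∈ VG, x ∈ e := by
  intro e he
  rcases mem_ltimesEdges.1 he with he | ⟨f, -, x, hx, rfl⟩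
  · exact hG e he
  · exact ⟨x, hx, mem_insert_self x f⟩

end LTimes

theorem matchNumLE_card_of_forall_exists_mem {E : Finset (Finset α)} {V : Finset α}
    (h : ∀ e ∈ E, ∃ x ∈ V, x ∈ e) : MatchNumLE E #V := by
  intro M hME hM
  refine card_le_card_of_forall_subsingleton (fun e x => x ∈ e) (fun e he => h e (hME he)) ?_
  rintro x - e ⟨he, hxe⟩ f ⟨hf, hxf⟩
  by_contra hef
  exact disjoint_left.1 (hM e he f hf hef) hxe hxf

section Coloring

variable {r k : ℕ} {c : α → Fin r}

theorem Mono.subset {s t : Finset α} (ht : Mono t c) (hst : s ⊆ t) : Mono s c :=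
  let ⟨i, hi⟩ := ht
  ⟨i, fun v hv => hi v (hst hv)⟩

theorem exists_mono_of_forall_ne (s : Finset α) (i : Fin r) (hi : ∀ x ∈ s, c x ≠ i)
    (hs : (r - 1) * k < #s) : ∃ t ∈ s.powersetCard (k + 1), Mono t c := by
  have hmaps : ∀ x ∈ s, c x ∈ univ.erase i := fun x hx => mem_erase.2 ⟨hi x hx, mem_univ _⟩
  obtain ⟨j, -, hj⟩ := exists_lt_card_fiber_of_mul_lt_card_of_maps_to hmaps
    (by simpa [card_erase_of_mem] using hs)
  obtain ⟨t, hts, ht⟩ := exists_subset_card_eq hj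
  exact ⟨t, mem_powersetCard.2 ⟨hts.trans (filter_subset _ _), ht⟩,
    j, fun v hv => (mem_filter.1 (hts hv)).2⟩

/-- Embed `s` into `Fin r × Fin k` and colour by the first coordinate: each colour class of `s`
then injects into `Fin k`. -/
theorem exists_isColoring_powersetCard (c : α → Fin r) (s : Finset α) (hs : #s ≤ r * k) :
    ∃ d : α → Fin r, (∀ x ∉ s, d x = c x) ∧ IsColoring (s.powersetCard (k + 1)) d := by
  classical
  obtain ⟨emb⟩ : Nonempty (s ↪ Fin r × Fin k) :=
    Function.Embedding.nonempty_of_card_le (by simpa using hs)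
  refine ⟨fun x => if hx : x ∈ s then (emb ⟨x, hx⟩).1 else c x, fun x hx => dif_neg hx, ?_⟩
  rintro t ht ⟨j, hj⟩
  obtain ⟨hts, htk⟩ := mem_powersetCard.1 ht
  have hsub : (t.subtype (· ∈ s)).map emb ⊆ {j} ×ˢ univ := by
    intro p hp
    obtain ⟨⟨x, hxs⟩, hx, rfl⟩ := mem_map.1 hp
    have hxj := hj x (mem_subtype.1 hx)
    simp only [dif_pos hxs] at hxj
    simp [← hxj]
  have := card_le_card hsub
  rw [card_map, card_subtype, filter_true_of_mem hts, htk, card_product] at this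
  simp at this

variable [DecidableEq α] {VG : Finset α} {EH : Finset (Finset α)}

theorem IsColoring.of_ltimesEdges
    (hc : IsColoring (ltimesEdges VG (VG.powersetCard (k + 1)) EH) c)
    (hVG : (r - 1) * k < #VG) : IsColoring EH c := by
  rintro e he ⟨i, hi⟩
  have hVGi : ∀ x ∈ VG, c x ≠ i := fun x hx hxi =>
    hc _ (mem_ltimesEdges.2 (Or.inr ⟨e, he, x, hx, rfl⟩))
      ⟨i, fun v hv => (mem_insert.1 hv).elim (· ▸ hxi) (hi v)⟩
  obtain ⟨t, ht, hmono⟩ := exists_mono_of_forall_ne VG i hVGi hVG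
  exact hc t (mem_ltimesEdges.2 (Or.inl ht)) hmono

theorem IsColoring.hColorable_ltimesEdges (hc : IsColoring EH c)
    (hdisj : ∀ f ∈ EH, Disjoint VG f) (hVG : #VG ≤ r * k) :
    HColorable (ltimesEdges VG (VG.powersetCard (k + 1)) EH) r := by
  obtain ⟨d, hdc, hd⟩ := exists_isColoring_powersetCard c VG hVG
  refine ⟨d, fun e he => ?_⟩
  rcases mem_ltimesEdges.1 he with he | ⟨f, hf, x, -, rfl⟩
  · exact hd e he
  · intro hmono
    obtain ⟨i, hi⟩ := hmono.subset (subset_insert x f)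
    exact hc f hf ⟨i, fun v hv => hdc v (disjoint_right.1 (hdisj f hf) hv) ▸ hi v hv⟩

end Coloring

end Hypergraph

/-- Let `H` be a `k`-uniform hypergraph and `G` the complete `(k+1)`-uniform
hypergraph on `(r-1)k + 1` vertices, with disjoint vertex sets. Then `G ⋉ H` is
`(k+1)`-uniform, `ν(G ⋉ H) ≤ (r-1)k + 1`, and `G ⋉ H` is `r`-colorable iff `H`
is `r`-colorable. -/
theorem ltimes_complete_uniform {α : Type*} [DecidableEq α] (k r : ℕ)
    (hk : 2 ≤ k) (hr : 2 ≤ r)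
    (VG VH : Finset α) (EH : Finset (Finset α))
    (hH : IsHypergraph VH EH) (hunif : ∀ e ∈ EH, e.card = k)
    (hcard : VG.card = (r - 1) * k + 1)
    (hdisj : Disjoint VG VH) :
    (∀ e ∈ ltimesEdges VG (VG.powersetCard (k + 1)) EH, e.card = k + 1) ∧
    MatchNumLE (ltimesEdges VG (VG.powersetCard (k + 1)) EH) ((r - 1) * k + 1) ∧
    (HColorable (ltimesEdges VG (VG.powersetCard (k + 1)) EH) r ↔ HColorable EH r) := by
  have hdisjH : ∀ f ∈ EH, Disjoint VG f := fun f hf => hdisj.mono_right (hH f hf).1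
  have hG : ∀ e ∈ VG.powersetCard (k + 1), ∃ x ∈ VG, x ∈ e := fun e he => by
    obtain ⟨hsub, he⟩ := mem_powersetCard.1 he
    obtain ⟨x, hx⟩ := card_pos.1 (by omega : 0 < #e)
    exact ⟨x, hsub hx, hx⟩
  have hVG : #VG ≤ r * k := by
    have : k ≤ r * k := Nat.le_mul_of_pos_left k (by omega)
    rw [hcard, Nat.sub_one_mul]
    omega
  refine ⟨card_eq_of_mem_ltimesEdges (fun e he => (mem_powersetCard.1 he).2) hunif hdisjH,
    hcard ▸ matchNumLE_card_of_forall_exists_mem (exists_mem_of_mem_ltimesEdges hG),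
    fun ⟨c, hc⟩ => ⟨c, hc.of_ltimesEdges (by omega)⟩,
    fun ⟨c, hc⟩ => hc.hColorable_ltimesEdges hdisjH hVG⟩
end

section
/- Let k ≥ 2 and r ≥ 2 be integers, let H be a k-uniform hypergraph, let v_1, …, v_r be r new vertices not in V(H), and let G' be the hypergraph with vertex set {v_1,…,v_r} ∪ V(H) and edge set {e ∪ {v_i} : e ∈ E(H), i ∈ {1,…,r}}. Then G' is (k+1)-uniform, ν(G') ≤ r, and the partial r-coloring ({v_1,…,v_r}, c') with c'(v_i) = i for all i ∈ {1,…,r} r-extends to G' if and only if H is r-colorable. -/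
open Finset

/-!
Every edge of `G'` is an edge of `H` coned off by one of the new vertices `v i`. Disjoint edges
of `G'` use distinct cone vertices, so `ν(G') ≤ r`. Under the precoloring, `e ∪ {v i}` is
monochromatic exactly when `e` is monochromatic in color `i`; hence a coloring of `G'` extending
the precoloring restricts to a coloring of `H`, and conversely any coloring of `H`, overwritten
on the `v i` by the precoloring, colors `G'`.
-/

open Function

section Gadget

variable {α ι : Type*} {r : ℕ}

theorem Mono.subset_s5 {e e' : Finset α} {c : α → Fin r} (h : Mono e' c) (hee' : e ⊆ e') :
    Mono e c :=
  let ⟨i, hi⟩ := h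
  ⟨i, fun w hw => hi w (hee' hw)⟩

theorem IsColoring.congr {E : Finset (Finset α)} {c c' : α → Fin r} (hc : IsColoring E c)
    (hcc' : ∀ e ∈ E, ∀ w ∈ e, c' w = c w) : IsColoring E c' := by
  rintro e he ⟨i, hi⟩
  exact hc e he ⟨i, fun w hw => hcc' e he w hw ▸ hi w hw⟩

variable [DecidableEq α] [Fintype ι]

def gadgetEdges (v : ι → α) (E : Finset (Finset α)) : Finset (Finset α) :=
  E.biUnion fun e => (univ : Finset ι).image fun i => insert (v i) e

variable {v : ι → α} {E : Finset (Finset α)}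

theorem mem_gadgetEdges {f : Finset α} :
    f ∈ gadgetEdges v E ↔ ∃ e ∈ E, ∃ i, insert (v i) e = f := by
  simp [gadgetEdges]

theorem card_of_mem_gadgetEdges {k : ℕ} (hvE : ∀ i, ∀ e ∈ E, v i ∉ e)
    (hE : ∀ e ∈ E, e.card = k) : ∀ f ∈ gadgetEdges v E, f.card = k + 1 := by
  intro f hf
  obtain ⟨e, he, i, rfl⟩ := mem_gadgetEdges.1 hf
  rw [card_insert_of_notMem (hvE i e he), hE e he]

theorem matchNumLE_gadgetEdges (v : ι → α) (E : Finset (Finset α)) :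
    MatchNumLE (gadgetEdges v E) (Fintype.card ι) := by
  intro M hM hMatch
  rw [← card_univ]
  refine card_le_card_of_forall_subsingleton (fun f i => v i ∈ f) ?_ ?_
  · intro f hf
    obtain ⟨e, -, i, rfl⟩ := mem_gadgetEdges.1 (hM hf)
    exact ⟨i, mem_univ i, mem_insert_self _ _⟩
  · intro i _ f hf f' hf'
    by_contra hne
    exact disjoint_left.1 (hMatch f hf.1 f' hf'.1 hne) hf.2 hf'.2

theorem IsColoring.to_gadgetEdges {c : α → Fin r} (hc : IsColoring E c) :
    IsColoring (gadgetEdges v E) c := by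
  intro f hf hmono
  obtain ⟨e, he, i, rfl⟩ := mem_gadgetEdges.1 hf
  exact hc e he (hmono.subset_s5 (subset_insert _ _))

theorem IsColoring.of_gadgetEdges {v : Fin r → α} {c : α → Fin r}
    (hc : IsColoring (gadgetEdges v E) c) (hcv : ∀ i, c (v i) = i) : IsColoring E c := by
  rintro e he ⟨i, hi⟩
  exact hc _ (mem_gadgetEdges.2 ⟨e, he, i, rfl⟩) ⟨i, (forall_mem_insert _ _ _).2 ⟨hcv i, hi⟩⟩

theorem exists_extension_gadgetEdges_iff {v : Fin r → α} (hv : Injective v)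
    (hvE : ∀ i, ∀ e ∈ E, v i ∉ e) :
    (∃ c : α → Fin r, IsColoring (gadgetEdges v E) c ∧ ∀ i, c (v i) = i) ↔
      HColorable E r := by
  constructor
  · rintro ⟨c, hc, hcv⟩
    exact ⟨c, hc.of_gadgetEdges hcv⟩
  · rintro ⟨c, hc⟩
    refine ⟨extend v id c, (hc.congr fun e he w hw => ?_).to_gadgetEdges,
      fun i => hv.extend_apply _ _ _⟩
    exact extend_apply' _ _ _ (by rintro ⟨i, rfl⟩; exact hvE i e he hw)

end Gadget

theorem precoloring_gadget_general {α : Type*} [DecidableEq α] (k r : ℕ)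
    (VH : Finset α) (EH : Finset (Finset α))
    (hH : IsHypergraph VH EH) (hunif : ∀ e ∈ EH, e.card = k)
    (v : Fin r → α) (hv : Function.Injective v) (hvVH : ∀ i, v i ∉ VH) :
    (∀ e ∈ EH.biUnion (fun e => (Finset.univ : Finset (Fin r)).image
        (fun i => insert (v i) e)), e.card = k + 1) ∧
    MatchNumLE (EH.biUnion (fun e => (Finset.univ : Finset (Fin r)).image
        (fun i => insert (v i) e))) r ∧
    ((∃ c : α → Fin r,
        IsColoring (EH.biUnion (fun e => (Finset.univ : Finset (Fin r)).image
          (fun i => insert (v i) e))) c ∧ ∀ i, c (v i) = i) ↔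
      HColorable EH r) := by
  have hvE : ∀ i, ∀ e ∈ EH, v i ∉ e := fun i e he hve => hvVH i ((hH e he).1 hve)
  exact ⟨card_of_mem_gadgetEdges hvE hunif,
    (Fintype.card_fin r ▸ matchNumLE_gadgetEdges v EH :),
    exists_extension_gadgetEdges_iff hv hvE⟩

/-- Let `H` be a `k`-uniform hypergraph, `v 0, …, v (r-1)` be `r` new distinct
vertices not in `V(H)`, and `G'` the hypergraph with vertex set
`{v 0, …, v (r-1)} ∪ V(H)` and edge set `{e ∪ {v i} : e ∈ E(H), i}`. Then `G'`
is `(k+1)`-uniform, `ν(G') ≤ r`, and the precoloring assigning color `i` to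
`v i` `r`-extends to `G'` iff `H` is `r`-colorable. -/
theorem precoloring_gadget {α : Type*} [DecidableEq α] (k r : ℕ)
    (hk : 2 ≤ k) (hr : 2 ≤ r)
    (VH : Finset α) (EH : Finset (Finset α))
    (hH : IsHypergraph VH EH) (hunif : ∀ e ∈ EH, e.card = k)
    (v : Fin r → α) (hv : Function.Injective v) (hvVH : ∀ i, v i ∉ VH) :
    (∀ e ∈ EH.biUnion (fun e => (Finset.univ : Finset (Fin r)).image
        (fun i => insert (v i) e)), e.card = k + 1) ∧
    MatchNumLE (EH.biUnion (fun e => (Finset.univ : Finset (Fin r)).image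
        (fun i => insert (v i) e))) r ∧
    ((∃ c : α → Fin r,
        IsColoring (EH.biUnion (fun e => (Finset.univ : Finset (Fin r)).image
          (fun i => insert (v i) e))) c ∧ ∀ i, c (v i) = i) ↔
      HColorable EH r) :=
  precoloring_gadget_general k r VH EH hH hunif v hv hvVH
end

section
/- Let t be a positive integer and let G be a 3-bounded hypergraph that is H_t-free, where H_t is the hypergraph with t+3 vertices and exactly one edge, of size 3. Let X and Y be disjoint stable sets of G with |X| = |Y| = t, and let d: V(G) → {1,2} be a function with d(v) = 1 for all v ∈ X and d(v) = 2 for all v ∈ Y. Suppose that (i) every edge e of G with e ∩ (X ∪ Y) ≠ ∅ is not monochromatic under d, and (ii) every edge of G of size at most 2 is not monochromatic under d. Then no edge of G is monochromatic under d, i.e., d is a 2-coloring of G. -/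
/-!
Suppose some edge `e` is monochromatic, say of color `i`. By (ii) it has size 3, and by (i) it
avoids `X ∪ Y`. Let `S` be whichever of `X`, `Y` has color `i`. Every edge inside `e ∪ S` is then
monochromatic, so by (i) it avoids `S`, and by (ii) it cannot be a proper subset of `e`. Hence `e`
is the only edge of `G[e ∪ S]`, an induced copy of `H_t`.
-/

open Finset

/-- `S` is a stable set of the hypergraph with edge set `E`: no edge is
contained in `S`. -/
def IsStable {α : Type*} (E : Finset (Finset α)) (S : Finset α) : Prop :=
  ∀ e ∈ E, ¬ e ⊆ S

/-- `G` contains an induced copy of `H_t` (the hypergraph with `t+3` vertices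
and exactly one edge, of size 3): a set `X` of `t+3` vertices such that `G[X]`
has exactly one edge and that edge has size 3. -/
def HasInducedHt {α : Type*} (V : Finset α) (E : Finset (Finset α)) (t : ℕ) : Prop :=
  ∃ X ⊆ V, X.card = t + 3 ∧
    ∃ e ∈ E, e ⊆ X ∧ e.card = 3 ∧ ∀ f ∈ E, f ⊆ X → f = e

theorem hasInducedHt_of_monochromatic {α : Type*} [DecidableEq α] {r t : ℕ}
    {V : Finset α} {E : Finset (Finset α)} {d : α → Fin r} {e S : Finset α} {i : Fin r}
    (hH : IsHypergraph V E) (he : e ∈ E) (he3 : e.card = 3) (he_col : ∀ v ∈ e, d v = i)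
    (hSV : S ⊆ V) (hScard : S.card = t) (hS_col : ∀ v ∈ S, d v = i) (heS : Disjoint e S)
    (hmeet : ∀ f ∈ E, (f ∩ S).Nonempty → ¬ Mono f d)
    (hsmall : ∀ f ∈ E, f.card ≤ 2 → ¬ Mono f d) :
    HasInducedHt V E t := by
  refine ⟨e ∪ S, union_subset (hH e he).1 hSV, ?_, e, he, subset_union_left, he3, ?_⟩
  · rw [card_union_of_disjoint heS, he3, hScard, add_comm]
  intro f hf hfeS
  have hf_mono : Mono f d := ⟨i, fun v hv => (mem_union.1 (hfeS hv)).elim (he_col v) (hS_col v)⟩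
  have hfe : f ⊆ e := fun v hv =>
    (mem_union.1 (hfeS hv)).resolve_right fun hvS => hmeet f hf ⟨v, mem_inter.2 ⟨hv, hvS⟩⟩ hf_mono
  by_contra hne
  have := card_lt_card (ssubset_of_subset_of_ne hfe hne)
  exact hsmall f hf (by omega) hf_mono

theorem two_coloring_of_Ht_free_general {α : Type*} [DecidableEq α] (t : ℕ)
    (V : Finset α) (E : Finset (Finset α))
    (hH : IsHypergraph V E) (hbdd : ∀ e ∈ E, e.card ≤ 3)
    (hfree : ¬ HasInducedHt V E t)
    (X Y : Finset α) (hXV : X ⊆ V) (hYV : Y ⊆ V)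
    (hXcard : X.card = t) (hYcard : Y.card = t)
    (d : α → Fin 2) (hdX : ∀ u ∈ X, d u = 0) (hdY : ∀ u ∈ Y, d u = 1)
    (h1 : ∀ e ∈ E, (e ∩ (X ∪ Y)).Nonempty → ¬ Mono e d)
    (h2 : ∀ e ∈ E, e.card ≤ 2 → ¬ Mono e d) :
    ∀ e ∈ E, ¬ Mono e d := by
  rintro e he ⟨i, hi⟩
  have he3 : e.card = 3 :=
    le_antisymm (hbdd e he) (not_lt.1 fun hlt => h2 e he (by omega) ⟨i, hi⟩)
  have heXY : Disjoint e (X ∪ Y) :=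
    disjoint_left.2 fun v hv hvXY => h1 e he ⟨v, mem_inter.2 ⟨hv, hvXY⟩⟩ ⟨i, hi⟩
  obtain ⟨S, hSV, hScard, hSXY, hS_col⟩ :
      ∃ S ⊆ V, S.card = t ∧ S ⊆ X ∪ Y ∧ ∀ u ∈ S, d u = i := by
    fin_cases i
    · exact ⟨X, hXV, hXcard, subset_union_left, hdX⟩
    · exact ⟨Y, hYV, hYcard, subset_union_right, hdY⟩
  exact hfree <| hasInducedHt_of_monochromatic hH he he3 hi hSV hScard hS_col
    (heXY.mono_right hSXY) (fun f hf hfS => h1 f hf (hfS.mono (inter_subset_inter_left hSXY))) h2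

/-- In a 3-bounded `H_t`-free hypergraph, if `X` and `Y` are disjoint stable
sets of size `t`, colored `1` and `2` respectively by `d`, and no edge meeting
`X ∪ Y` and no edge of size at most 2 is monochromatic under `d`, then `d` is a
2-coloring of `G`. -/
theorem two_coloring_of_Ht_free {α : Type*} [DecidableEq α] (t : ℕ) (ht : 0 < t)
    (V : Finset α) (E : Finset (Finset α))
    (hH : IsHypergraph V E) (hbdd : ∀ e ∈ E, e.card ≤ 3)
    (hfree : ¬ HasInducedHt V E t)
    (X Y : Finset α) (hXV : X ⊆ V) (hYV : Y ⊆ V) (hXY : Disjoint X Y)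
    (hXstable : IsStable E X) (hYstable : IsStable E Y)
    (hXcard : X.card = t) (hYcard : Y.card = t)
    (d : α → Fin 2) (hdX : ∀ u ∈ X, d u = 0) (hdY : ∀ u ∈ Y, d u = 1)
    (h1 : ∀ e ∈ E, (e ∩ (X ∪ Y)).Nonempty → ¬ Mono e d)
    (h2 : ∀ e ∈ E, e.card ≤ 2 → ¬ Mono e d) :
    ∀ e ∈ E, ¬ Mono e d :=
  two_coloring_of_Ht_free_general t V E hH hbdd hfree X Y hXV hYV hXcard hYcard d hdX hdY h1 h2
end

section
/- For every positive integer s there exists a positive integer s' such that every linear 3-uniform hypergraph G that contains a matching of size s' contains an induced matching of size s, i.e., there are s pairwise disjoint edges e_1, …, e_s of G such that the induced subhypergraph G[e_1 ∪ ⋯ ∪ e_s] has exactly the s edges e_1, …, e_s. -/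
open Finset

/-- `M` is an induced matching of the hypergraph with edge set `E`: a matching
`M ⊆ E` such that the subhypergraph induced on the union of the edges of `M`
has no edges other than those of `M`. -/
def IsInducedMatching {α : Type*} [DecidableEq α] (E : Finset (Finset α))
    (M : Finset (Finset α)) : Prop :=
  M ⊆ E ∧ IsMatching M ∧ ∀ f ∈ E, f ⊆ M.biUnion id → f ∈ M

/-!
Grow an induced matching `S` inside a given matching `M` greedily, one edge of `M` at a time.
An edge `e ∈ M \ S` can be added unless some other edge `f` lies in `e ∪ ⋃ S`. By linearity
`f` meets `e` in at most one vertex, so it meets `⋃ S` in a pair of vertices, and that pair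
determines `f` and hence `e`. So at most `C(3|S|, 2)` edges of `M` are blocked, and
`|M| ≥ s + C(3s, 2)` lets the greedy step run `s` times.
-/

section

variable {α : Type*} {E M S : Finset (Finset α)} {e f : Finset α}

theorem IsMatching.mono (hM : IsMatching M) (hSM : S ⊆ M) : IsMatching S :=
  fun e he f hf => hM e (hSM he) f (hSM hf)

/-- Each member contains a pair of points of `U` that lies in no other member. -/
theorem card_le_choose_two_of_two_le_card_inter {F : Finset (Finset α)} {U : Finset α}
    [DecidableEq α] (hU : ∀ f ∈ F, 2 ≤ (f ∩ U).card)
    (hF : ∀ f ∈ F, ∀ g ∈ F, f ≠ g → (f ∩ g).card ≤ 1) :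
    F.card ≤ U.card.choose 2 := by
  choose! p hpU hpcard using fun f hf => exists_subset_card_eq (hU f hf)
  rw [← card_powersetCard]
  refine card_le_card_of_injOn p
    (fun f hf => mem_powersetCard.2 ⟨(hpU f hf).trans inter_subset_right, hpcard f hf⟩) ?_
  intro f hf g hg hpfg
  by_contra hfg
  have hp : p f ⊆ f ∩ g :=
    subset_inter ((hpU f hf).trans inter_subset_left) (hpfg ▸ (hpU g hg).trans inter_subset_left)
  have := card_le_card hp
  have := hF f hf g hg hfg
  have := hpcard f hf
  omega

variable [DecidableEq α]

theorem isInducedMatching_empty (hE : ∅ ∉ E) : IsInducedMatching E ∅ :=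
  ⟨empty_subset _, fun _ h => absurd h (notMem_empty _), fun f hf hf0 => by
    rw [biUnion_empty, subset_empty] at hf0
    exact absurd (hf0 ▸ hf) hE⟩

theorem IsMatching.disjoint_biUnion_of_mem_sdiff (hM : IsMatching M) (hSM : S ⊆ M)
    (he : e ∈ M \ S) : Disjoint e (S.biUnion id) := by
  rw [disjoint_biUnion_right]
  intro g hg
  exact hM e (mem_sdiff.1 he).1 g (hSM hg) fun h => (mem_sdiff.1 he).2 (h ▸ hg)

theorem isInducedMatching_insert (hME : M ⊆ E) (hM : IsMatching M) (hSM : S ⊆ M) (he : e ∈ M)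
    (hclosed : ∀ f ∈ E, f ⊆ e ∪ S.biUnion id → f ∈ insert e S) :
    IsInducedMatching E (insert e S) :=
  ⟨(insert_subset he hSM).trans hME, hM.mono (insert_subset he hSM), by
    rwa [biUnion_insert]⟩

theorem two_le_card_inter_of_subset_union {U : Finset α} (h3 : ∀ e ∈ E, e.card = 3)
    (hlin : ∀ e ∈ E, ∀ f ∈ E, e ≠ f → (e ∩ f).card ≤ 1)
    (he : e ∈ E) (hf : f ∈ E) (hfe : f ≠ e) (hsub : f ⊆ e ∪ U) : 2 ≤ (f ∩ U).card := by
  have hfeU : (f ∩ e ∪ f ∩ U).card ≤ (f ∩ e).card + (f ∩ U).card := card_union_le _ _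
  rw [← inter_union_distrib_left, inter_eq_left.2 hsub, h3 f hf] at hfeU
  have := hlin f hf e he hfe
  omega

theorem IsInducedMatching.inter_nonempty_of_subset_union (hS : IsInducedMatching E S)
    (hf : f ∈ E) (hfS : f ∉ S) (hsub : f ⊆ e ∪ S.biUnion id) : (f ∩ e).Nonempty := by
  rw [nonempty_iff_ne_empty, ne_eq, ← disjoint_iff_inter_eq_empty]
  exact fun hfe => hfS (hS.2.2 f hf (hfe.left_le_of_le_sup_left hsub))

theorem exists_isInducedMatching_insert (h3 : ∀ e ∈ E, e.card = 3)
    (hlin : ∀ e ∈ E, ∀ f ∈ E, e ≠ f → (e ∩ f).card ≤ 1) (hME : M ⊆ E) (hM : IsMatching M)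
    (hSM : S ⊆ M) (hS : IsInducedMatching E S)
    (hcard : (S.biUnion id).card.choose 2 < (M \ S).card) :
    ∃ e ∈ M \ S, IsInducedMatching E (insert e S) := by
  by_contra! hblocked
  have hblocker : ∀ e ∈ M \ S, ∃ f ∈ E, f ⊆ e ∪ S.biUnion id ∧ f ∉ insert e S := by
    intro e he
    by_contra! hclosed
    exact hblocked e he (isInducedMatching_insert hME hM hSM (mem_sdiff.1 he).1 hclosed)
  choose! w hwE hwsub hwnot using hblocker
  have hmeet : ∀ e ∈ M \ S, (w e ∩ e).Nonempty := fun e he =>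
    hS.inter_nonempty_of_subset_union (hwE e he) (fun h => hwnot e he (mem_insert_of_mem h))
      (hwsub e he)
  have hinj : Set.InjOn w ↑(M \ S) := by
    intro e₁ he₁ e₂ he₂ hw
    by_contra hne
    obtain ⟨x, hx⟩ := hmeet e₁ he₁
    obtain ⟨hxw, hxe₁⟩ := mem_inter.1 hx
    rcases mem_union.1 (hwsub e₂ he₂ (hw ▸ hxw)) with hxe₂ | hxU
    · exact disjoint_left.1 (hM _ (mem_sdiff.1 he₁).1 _ (mem_sdiff.1 he₂).1 hne) hxe₁ hxe₂
    · exact disjoint_left.1 (hM.disjoint_biUnion_of_mem_sdiff hSM he₁) hxe₁ hxU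
  have hpairs : ((M \ S).image w).card ≤ (S.biUnion id).card.choose 2 := by
    refine card_le_choose_two_of_two_le_card_inter ?_ ?_
    · simp only [forall_mem_image]
      intro e he
      exact two_le_card_inter_of_subset_union h3 hlin (hME (mem_sdiff.1 he).1) (hwE e he)
        (fun h => hwnot e he (by rw [h]; exact mem_insert_self e S)) (hwsub e he)
    · simp only [forall_mem_image]
      intro e₁ he₁ e₂ he₂ hne
      exact hlin _ (hwE e₁ he₁) _ (hwE e₂ he₂) hne
  rw [card_image_of_injOn hinj] at hpairs
  omega

theorem exists_isInducedMatching_subset_card (h3 : ∀ e ∈ E, e.card = 3)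
    (hlin : ∀ e ∈ E, ∀ f ∈ E, e ≠ f → (e ∩ f).card ≤ 1) (hME : M ⊆ E) (hM : IsMatching M) :
    ∀ k, k + (3 * k).choose 2 ≤ M.card → ∃ S ⊆ M, IsInducedMatching E S ∧ S.card = k
  | 0, _ => ⟨∅, empty_subset _, isInducedMatching_empty fun h => by simpa using h3 ∅ h, rfl⟩
  | k + 1, hk => by
    have hmono : (3 * k).choose 2 ≤ (3 * (k + 1)).choose 2 := Nat.choose_le_choose 2 (by omega)
    obtain ⟨S, hSM, hS, rfl⟩ :=
      exists_isInducedMatching_subset_card h3 hlin hME hM k (by omega)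
    have hU : (S.biUnion id).card ≤ 3 * (S.card + 1) := by
      have := card_biUnion_le_card_mul S id 3 fun e he => (h3 e (hME (hSM he))).le
      omega
    have hcard : (S.biUnion id).card.choose 2 < (M \ S).card := by
      have := Nat.choose_le_choose 2 hU
      rw [card_sdiff_of_subset hSM]
      omega
    obtain ⟨e, he, heS⟩ := exists_isInducedMatching_insert h3 hlin hME hM hSM hS hcard
    exact ⟨insert e S, insert_subset (mem_sdiff.1 he).1 hSM, heS,
      card_insert_of_notMem (mem_sdiff.1 he).2⟩

end

/-- For every `s ≥ 1` there is `s' ≥ 1` such that every linear 3-uniform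
hypergraph containing a matching of size `s'` contains an induced matching of
size `s`. -/
theorem induced_matching_of_large_matching (s : ℕ) (hs : 0 < s) :
    ∃ s' : ℕ, 0 < s' ∧
      ∀ (α : Type) [DecidableEq α] (V : Finset α) (E : Finset (Finset α)),
        IsHypergraph V E → (∀ e ∈ E, e.card = 3) →
        (∀ e ∈ E, ∀ f ∈ E, e ≠ f → (e ∩ f).card ≤ 1) →
        (∃ M ⊆ E, IsMatching M ∧ M.card = s') →
        ∃ M : Finset (Finset α), IsInducedMatching E M ∧ M.card = s := by
  refine ⟨s + (3 * s).choose 2, by omega, fun α _ V E _ h3 hlin ⟨M, hME, hM, hMcard⟩ => ?_⟩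
  obtain ⟨S, -, hS, hScard⟩ := exists_isInducedMatching_subset_card h3 hlin hME hM s hMcard.ge
  exact ⟨S, hS, hScard⟩
end
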